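/- arXiv:2310.17616 — 8 statements merged into one kernel-verified Lean document; each statement's English description precedes it below -/
import Mathlib

section
/- For a deeply embedded Hoare logic whose proof trees are generated only by the primary rules (skip, break, continue, assign, sequence, loop, if, consequence), the sequence inversion rule holds: if ⊢ {P} c1;;c2 {Q, [Rb, Rc]} is provable, then there exists an assertion S such that ⊢ {P} c1 {S, [Rb, Rc]} and ⊢ {S} c2 {Q, [Rb, Rc]} are provable. -/
/- Deeply embedded Hoare logic for the While-CF language.
   States map program variables to integers, assertions are shallowly
   embedded as state predicates, and the provability judgment
   `Provable P c Q Rb Rc` (⊢ {P} c {Q, [Rb, Rc]}) is generated by exactly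
   the primary rules: skip, break, continue, assign, seq, if, loop,
   consequence. -/

abbrev PState := String → Int
abbrev Expr := PState → Int
abbrev Assertion := PState → Prop

inductive Com : Type where
  | skip : Com
  | brk : Com
  | cont : Com
  | assign : String → Expr → Com
  | seq : Com → Com → Com
  | ifc : Expr → Com → Com → Com
  /-- `forloop c1 c2` is the C-style loop `for(;; c2) c1` with body `c1`
      and increment step `c2`. -/
  | forloop : Com → Com → Com

def updV (σ : PState) (x : String) (v : Int) : PState :=
  fun y => if y = x then v else σ y

def aBot : Assertion := fun _ => False

def Entails (P Q : Assertion) : Prop := ∀ σ, P σ → Q σ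

/-- `Provable P c Q Rb Rc` is the deeply embedded judgment
    ⊢ {P} c {Q, [Rb, Rc]}, with normal postcondition `Q`, break
    postcondition `Rb` and continue postcondition `Rc`. -/
inductive Provable : Assertion → Com → Assertion → Assertion → Assertion → Prop where
  | skip (P : Assertion) : Provable P .skip P aBot aBot
  | brk (P : Assertion) : Provable P .brk aBot P aBot
  | cont (P : Assertion) : Provable P .cont aBot aBot P
  | assign (P : Assertion) (x : String) (e : Expr) :
      Provable (fun σ => P (updV σ x (e σ))) (.assign x e) P aBot aBot
  | seq (P Q' Q Rb Rc : Assertion) (c1 c2 : Com) :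
      Provable P c1 Q' Rb Rc → Provable Q' c2 Q Rb Rc →
      Provable P (.seq c1 c2) Q Rb Rc
  | ifc (P Q Rb Rc : Assertion) (e : Expr) (c1 c2 : Com) :
      Provable (fun σ => P σ ∧ e σ ≠ 0) c1 Q Rb Rc →
      Provable (fun σ => P σ ∧ e σ = 0) c2 Q Rb Rc →
      Provable P (.ifc e c1 c2) Q Rb Rc
  | loop (P I Q : Assertion) (c1 c2 : Com) :
      Provable P c1 I Q I → Provable I c2 P Q aBot →
      Provable P (.forloop c1 c2) Q aBot aBot
  | conseq (P P' Q Q' Rb Rb' Rc Rc' : Assertion) (c : Com) :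
      Provable P' c Q' Rb' Rc' →
      Entails P P' → Entails Q' Q → Entails Rb' Rb → Entails Rc' Rc →
      Provable P c Q Rb Rc

/-- seq-inv: if ⊢ {P} c1;;c2 {Q, [Rb, Rc]} is provable, then
    there exists an assertion `S` with ⊢ {P} c1 {S, [Rb, Rc]} and
    ⊢ {S} c2 {Q, [Rb, Rc]}. -/
theorem seq_inv (P Q Rb Rc : Assertion) (c1 c2 : Com)
    (h : Provable P (.seq c1 c2) Q Rb Rc) :
    ∃ S : Assertion, Provable P c1 S Rb Rc ∧ Provable S c2 Q Rb Rc := by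
  generalize hc : Com.seq c1 c2 = c at h
  induction h generalizing c1 c2 with
  | seq P Q' Q Rb Rc d1 d2 h1 h2 _ _ =>
    cases hc
    exact ⟨Q', h1, h2⟩
  | conseq P P' Q Q' Rb Rb' Rc Rc' c h hP hQ hRb hRc ih =>
    obtain ⟨S, hs1, hs2⟩ := ih _ _ hc
    exact ⟨S, .conseq _ _ _ _ _ _ _ _ _ hs1 hP (fun _ h => h) hRb hRc,
           .conseq _ _ _ _ _ _ _ _ _ hs2 (fun _ h => h) hQ hRb hRc⟩
  | _ => simp_all
end

section
/- For the deeply embedded Hoare logic with primary rules only, the loop inversion rule holds: if ⊢ {P} for(;;c2) c1 {Q, [⊥, ⊥]} is provable, then there exist assertions I1 and I2 such that ⊢ {I1} c1 {I2, [Q, I2]}, ⊢ {I2} c2 {I1, [Q, ⊥]}, and P entails I1. -/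
lemma loop_inv_aux (P Q Rb Rc : Assertion) (c : Com)
    (h : Provable P c Q Rb Rc) :
    ∀ c1 c2, c = .forloop c1 c2 →
    ∃ I1 I2 : Assertion,
      Provable I1 c1 I2 Q I2 ∧ Provable I2 c2 I1 Q aBot ∧ Entails P I1 := by
  induction h with
  | loop P I Q c1 c2 h1 h2 _ _ =>
    intro d1 d2 he
    cases he
    exact ⟨P, I, h1, h2, fun σ h => h⟩
  | conseq P P' Q Q' Rb Rb' Rc Rc' c h hP hQ hRb hRc ih =>
    intro d1 d2 he
    obtain ⟨I1, I2, H1, H2, HE⟩ := ih d1 d2 he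
    refine ⟨I1, I2, ?_, ?_, fun σ hσ => HE σ (hP σ hσ)⟩
    · exact .conseq I1 I1 I2 I2 Q Q' I2 I2 d1 H1 (fun σ h => h) (fun σ h => h) hQ (fun σ h => h)
    · exact .conseq I2 I2 I1 I1 Q Q' aBot aBot d2 H2 (fun σ h => h) (fun σ h => h) hQ (fun σ h => h)
  | _ => intro d1 d2 he; simp_all

/-- loop-inv: if ⊢ {P} for(;;c2) c1 {Q, [⊥, ⊥]} is provable,
    then there exist assertions I1, I2 with ⊢ {I1} c1 {I2, [Q, I2]},
    ⊢ {I2} c2 {I1, [Q, ⊥]}, and P ⊢ I1. -/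
theorem loop_inv (P Q : Assertion) (c1 c2 : Com)
    (h : Provable P (.forloop c1 c2) Q aBot aBot) :
    ∃ I1 I2 : Assertion,
      Provable I1 c1 I2 Q I2 ∧ Provable I2 c2 I1 Q aBot ∧ Entails P I1 := by
  exact loop_inv_aux P Q aBot aBot _ h c1 c2 rfl
end

section
/- For the deeply embedded Hoare logic with primary rules only, the if inversion rule holds: if ⊢ {P} if e then c1 else c2 {Q, [R⃗]} is provable, then both ⊢ {P ∧ ⟦e⟧=true} c1 {Q, [R⃗]} and ⊢ {P ∧ ⟦e⟧=false} c2 {Q, [R⃗]} are provable. -/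

theorem if_inv_aux (P Q Rb Rc : Assertion) (c : Com)
    (h : Provable P c Q Rb Rc) : ∀ e c1 c2, c = .ifc e c1 c2 →
    Provable (fun σ => P σ ∧ e σ ≠ 0) c1 Q Rb Rc ∧
    Provable (fun σ => P σ ∧ e σ = 0) c2 Q Rb Rc := by
  induction h with
  | ifc P Q Rb Rc e c1 c2 h1 h2 _ _ =>
    intro e' c1' c2' heq
    cases heq
    exact ⟨h1, h2⟩
  | conseq P P' Q Q' Rb Rb' Rc Rc' c h hP hQ hRb hRc ih =>
    intro e c1 c2 heq
    obtain ⟨h1, h2⟩ := ih e c1 c2 heq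
    constructor
    · exact Provable.conseq _ _ _ _ _ _ _ _ _ h1
        (fun σ hσ => ⟨hP σ hσ.1, hσ.2⟩) hQ hRb hRc
    · exact Provable.conseq _ _ _ _ _ _ _ _ _ h2
        (fun σ hσ => ⟨hP σ hσ.1, hσ.2⟩) hQ hRb hRc
  | _ => intro e c1 c2 heq; simp_all

/-- if-inv: if ⊢ {P} if e then c1 else c2 {Q, [Rb, Rc]} is
    provable, then ⊢ {P ∧ ⟦e⟧=true} c1 {Q, [Rb, Rc]} and
    ⊢ {P ∧ ⟦e⟧=false} c2 {Q, [Rb, Rc]} are provable (a boolean condition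
    `e` is true at σ iff `e σ ≠ 0`). -/
theorem if_inv (P Q Rb Rc : Assertion) (e : Expr) (c1 c2 : Com)
    (h : Provable P (.ifc e c1 c2) Q Rb Rc) :
    Provable (fun σ => P σ ∧ e σ ≠ 0) c1 Q Rb Rc ∧
    Provable (fun σ => P σ ∧ e σ = 0) c2 Q Rb Rc := by
  exact if_inv_aux P Q Rb Rc _ h e c1 c2 rfl
end

section
/- Under the weakest-precondition based shallow embedding, a small-step simulation lifts to an implication of weakest preconditions: if ∼ is a simulation relation and (c2,κ2) ∼ (c1,κ1), then for all states σ and postconditions Q, R⃗, σ ⊨ WP(c1,κ1){Q,[R⃗]} implies σ ⊨ WP(c2,κ2){Q,[R⃗]}. -/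
/-- Continuation frames: `kseq c` is KSeq(c); `kloop1 c1 c2` is
    Kloop1(c1,c2) (in the loop body); `kloop2 c1 c2` is Kloop2(c1,c2)
    (in the increment step). -/
inductive KFrame : Type where
  | kseq : Com → KFrame
  | kloop1 : Com → Com → KFrame
  | kloop2 : Com → Com → KFrame

abbrev Kont := List KFrame
abbrev Config := Com × Kont × PState

/-- The small-step reduction (c, κ, σ) →c (c', κ', σ'). -/
inductive Step : Config → Config → Prop where
  | assign (x : String) (e : Expr) (κ : Kont) (σ : PState) :
      Step (.assign x e, κ, σ) (.skip, κ, updV σ x (e σ))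
  | seq (c1 c2 : Com) (κ : Kont) (σ : PState) :
      Step (.seq c1 c2, κ, σ) (c1, .kseq c2 :: κ, σ)
  | skip_seq (c : Com) (κ : Kont) (σ : PState) :
      Step (.skip, .kseq c :: κ, σ) (c, κ, σ)
  | brk_seq (c : Com) (κ : Kont) (σ : PState) :
      Step (.brk, .kseq c :: κ, σ) (.brk, κ, σ)
  | cont_seq (c : Com) (κ : Kont) (σ : PState) :
      Step (.cont, .kseq c :: κ, σ) (.cont, κ, σ)
  | if_true (e : Expr) (c1 c2 : Com) (κ : Kont) (σ : PState) :
      e σ ≠ 0 → Step (.ifc e c1 c2, κ, σ) (c1, κ, σ)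
  | if_false (e : Expr) (c1 c2 : Com) (κ : Kont) (σ : PState) :
      e σ = 0 → Step (.ifc e c1 c2, κ, σ) (c2, κ, σ)
  | for_intro (c1 c2 : Com) (κ : Kont) (σ : PState) :
      Step (.forloop c1 c2, κ, σ)
           (.seq c1 .cont, .kloop1 c1 c2 :: κ, σ)
  | skip_loop2 (c1 c2 : Com) (κ : Kont) (σ : PState) :
      Step (.skip, .kloop2 c1 c2 :: κ, σ)
           (.seq c1 .cont, .kloop1 c1 c2 :: κ, σ)
  | cont_loop1 (c1 c2 : Com) (κ : Kont) (σ : PState) :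
      Step (.cont, .kloop1 c1 c2 :: κ, σ) (c2, .kloop2 c1 c2 :: κ, σ)
  | brk_loop1 (c1 c2 : Com) (κ : Kont) (σ : PState) :
      Step (.brk, .kloop1 c1 c2 :: κ, σ) (.skip, κ, σ)
  | brk_loop2 (c1 c2 : Com) (κ : Kont) (σ : PState) :
      Step (.brk, .kloop2 c1 c2 :: κ, σ) (.skip, κ, σ)

/-- Zero or finitely many reduction steps. -/
def MSteps : Config → Config → Prop := Relation.ReflTransGen Step

def Reducible (cfg : Config) : Prop := ∃ cfg', Step cfg cfg'

/-- `(c, κ)` has safely terminated: κ = ε and c ∈ {skip, break, continue}. -/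
def Terminal (c : Com) (κ : Kont) : Prop :=
  κ = [] ∧ (c = .skip ∨ c = .brk ∨ c = .cont)

/-- A configuration that is neither safely terminated nor reducible is
    stuck in an error. -/
def IsError (cfg : Config) : Prop :=
  ¬ Terminal cfg.1 cfg.2.1 ∧ ¬ Reducible cfg

/-- The terminal case of the weakest precondition. -/
def WPpost (Q Rb Rc : Assertion) (c : Com) (σ : PState) : Prop :=
  (c = .skip ∧ Q σ) ∨ (c = .brk ∧ Rb σ) ∨ (c = .cont ∧ Rc σ)

/-- The generating functional of the weakest precondition. -/
def WPstep (Q Rb Rc : Assertion) (X : Config → Prop) (cfg : Config) : Prop :=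
  (cfg.2.1 = [] ∧ WPpost Q Rb Rc cfg.1 cfg.2.2) ∨
  (Reducible cfg ∧ ∀ cfg', Step cfg cfg' → X cfg')

/-- σ ⊨ WP (c, κ) {Q, [Rb, Rc]}: the largest (coinductive) predicate
    closed under the terminal and preservation cases, given here as the
    union of all post-fixed points of the generating functional. -/
def WP (c : Com) (κ : Kont) (Q Rb Rc : Assertion) : Assertion := fun σ =>
  ∃ X : Config → Prop,
    (∀ cfg, X cfg → WPstep Q Rb Rc X cfg) ∧ X (c, κ, σ)

/-- A simulation relation between (command, continuation) pairs:
    Termination, Preservation, and Error cases. -/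
def IsSimulation (R : Com × Kont → Com × Kont → Prop) : Prop :=
  ∀ c1 κ1 c2 κ2, R (c1, κ1) (c2, κ2) →
    (Terminal c1 κ1 → ∀ σ, MSteps (c2, κ2, σ) (c1, κ1, σ)) ∧
    (∀ σ c1' κ1' σ', Step (c1, κ1, σ) (c1', κ1', σ') →
      ∃ c2' κ2', R (c1', κ1') (c2', κ2') ∧
        MSteps (c2, κ2, σ) (c2', κ2', σ')) ∧
    (∀ σ, IsError (c1, κ1, σ) →
      ∃ cfg, MSteps (c2, κ2, σ) cfg ∧ IsError cfg)


lemma terminal_no_step {c : Com} {σ : PState}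
    (h : c = .skip ∨ c = .brk ∨ c = .cont) :
    ¬ Reducible (c, ([] : Kont), σ) := by
  rintro ⟨cfg', hs⟩
  rcases h with rfl | rfl | rfl <;> cases hs

lemma wp_step {c c' : Com} {κ κ' : Kont} {σ σ' : PState} {Q Rb Rc : Assertion}
    (h : WP c κ Q Rb Rc σ) (hs : Step (c, κ, σ) (c', κ', σ')) :
    WP c' κ' Q Rb Rc σ' := by
  obtain ⟨X, hX, hx⟩ := h
  refine ⟨X, hX, ?_⟩
  rcases hX _ hx with ⟨hk, hp⟩ | ⟨_, hstep⟩
  · exfalso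
    simp only at hk hp
    subst hk
    exact terminal_no_step
      (by rcases hp with ⟨rfl, _⟩ | ⟨rfl, _⟩ | ⟨rfl, _⟩ <;> simp) ⟨_, hs⟩
  · exact hstep _ hs

lemma wp_msteps {cfg cfg' : Config} {Q Rb Rc : Assertion}
    (hm : MSteps cfg cfg') (h : WP cfg.1 cfg.2.1 Q Rb Rc cfg.2.2) :
    WP cfg'.1 cfg'.2.1 Q Rb Rc cfg'.2.2 := by
  induction hm with
  | refl => exact h
  | tail _hm hs ih =>
    rename_i b c
    obtain ⟨cb, κb, σb⟩ := b
    obtain ⟨cc, κc, σc⟩ := c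
    exact wp_step ih hs

lemma wp_unfold {c : Com} {κ : Kont} {σ : PState} {Q Rb Rc : Assertion}
    (h : WP c κ Q Rb Rc σ) :
    (κ = [] ∧ WPpost Q Rb Rc c σ) ∨ Reducible (c, κ, σ) := by
  obtain ⟨X, hX, hx⟩ := h
  rcases hX _ hx with ⟨hk, hp⟩ | ⟨hr, _⟩
  · exact Or.inl ⟨hk, hp⟩
  · exact Or.inr hr

lemma wp_not_error {c : Com} {κ : Kont} {σ : PState} {Q Rb Rc : Assertion}
    (h : WP c κ Q Rb Rc σ) : ¬ IsError (c, κ, σ) := by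
  rintro ⟨hnt, hnr⟩
  rcases wp_unfold h with ⟨hk, hp⟩ | hr
  · exact hnt ⟨hk, by rcases hp with ⟨rfl, _⟩ | ⟨rfl, _⟩ | ⟨rfl, _⟩ <;> simp⟩
  · exact hnr hr

/-- a small-step simulation lifts to an implication of
    weakest preconditions: if ∼ is a simulation and (c2,κ2) ∼ (c1,κ1),
    then WP (c1,κ1) {Q,[Rb,Rc]} implies WP (c2,κ2) {Q,[Rb,Rc]} at every
    state. -/
theorem wp_simulation (R : Com × Kont → Com × Kont → Prop)
    (hsim : IsSimulation R)
    (c1 c2 : Com) (κ1 κ2 : Kont) (hrel : R (c2, κ2) (c1, κ1)) :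
    ∀ (σ : PState) (Q Rb Rc : Assertion),
      WP c1 κ1 Q Rb Rc σ → WP c2 κ2 Q Rb Rc σ := by
  intro σ Q Rb Rc hwp
  refine ⟨fun cfg => ∃ d l, R (cfg.1, cfg.2.1) (d, l) ∧ WP d l Q Rb Rc cfg.2.2,
    ?_, c1, κ1, hrel, hwp⟩
  rintro ⟨c, κ, τ⟩ ⟨d, l, hR, hw⟩
  obtain ⟨hterm, hpres, herr⟩ := hsim _ _ _ _ hR
  by_cases ht : Terminal c κ
  · obtain ⟨rfl, hc⟩ := ht
    have hw' : WP c [] Q Rb Rc τ :=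
      wp_msteps (cfg := (d, l, τ)) (cfg' := (c, [], τ)) (hterm ⟨rfl, hc⟩ τ) hw
    rcases wp_unfold hw' with ⟨_, hp⟩ | hr
    · exact Or.inl ⟨rfl, hp⟩
    · exact absurd hr (terminal_no_step hc)
  · by_cases hr : Reducible (c, κ, τ)
    · refine Or.inr ⟨hr, ?_⟩
      rintro ⟨c', κ', τ'⟩ hs
      obtain ⟨d', l', hR', hm⟩ := hpres τ c' κ' τ' hs
      exact ⟨d', l', hR', wp_msteps (cfg := (d, l, τ)) (cfg' := (d', l', τ')) hm hw⟩
    · obtain ⟨cfg, hm, herr'⟩ := herr τ ⟨ht, hr⟩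
      obtain ⟨ce, κe, σe⟩ := cfg
      exact absurd herr' (wp_not_error (wp_msteps (cfg := (d, l, τ)) hm hw))
end

section
/- Under the weakest-precondition based shallow embedding, the nocontinue rule is valid: if c and κ contain no continue command and σ ⊨ WP(c,κ){Q,[Rb,Rc]}, then σ ⊨ WP(c,κ){Q,[Rb,Rc']} for any assertion Rc'. The proof uses the preservation lemma that small-step reduction preserves the no-continue property of the configuration. -/
/-- `noContinue c`: `c` contains no continue statement. -/
def noContinue : Com → Prop
  | .cont => False
  | .seq c1 c2 => noContinue c1 ∧ noContinue c2
  | .ifc _ c1 c2 => noContinue c1 ∧ noContinue c2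
  | .forloop c1 c2 => noContinue c1 ∧ noContinue c2
  | _ => True

/-- `noContinueK κ`: each frame's commands are continue-free. -/
def noContinueK : Kont → Prop
  | [] => True
  | .kseq c :: κ => noContinue c ∧ noContinueK κ
  | .kloop1 c1 c2 :: κ => noContinue c1 ∧ noContinue c2 ∧ noContinueK κ
  | .kloop2 c1 c2 :: κ => noContinue c1 ∧ noContinue c2 ∧ noContinueK κ

/-- A continuation guards `continue`: reaches a `kloop1` through `kseq`s. -/
def guardedK : Kont → Prop
  | [] => False
  | .kseq _ :: κ => guardedK κ
  | .kloop1 _ _ :: _ => True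
  | .kloop2 _ _ :: _ => False

/-- Commands reachable inside a loop body: continue-free, the marker
    `cont`, or `c1; cont` with `c1` continue-free. -/
def contOK (c : Com) : Prop :=
  noContinue c ∨ c = .cont ∨ (∃ c1, c = .seq c1 .cont ∧ noContinue c1)

def goodC (c : Com) (κ : Kont) : Prop :=
  noContinue c ∨ (guardedK κ ∧ contOK c)

def goodK : Kont → Prop
  | [] => True
  | .kseq c :: κ => goodC c κ ∧ goodK κ
  | .kloop1 c1 c2 :: κ => noContinue c1 ∧ noContinue c2 ∧ goodK κ
  | .kloop2 c1 c2 :: κ => noContinue c1 ∧ noContinue c2 ∧ goodK κ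

lemma noContinueK_goodK : ∀ κ : Kont, noContinueK κ → goodK κ := by
  intro κ
  induction κ with
  | nil => intro; trivial
  | cons f κ ih =>
    cases f with
    | kseq c => exact fun h => ⟨Or.inl h.1, ih h.2⟩
    | kloop1 c1 c2 => exact fun h => ⟨h.1, h.2.1, ih h.2.2⟩
    | kloop2 c1 c2 => exact fun h => ⟨h.1, h.2.1, ih h.2.2⟩

lemma good_preserved {c κ σ c' κ' σ'}
    (hs : Step (c, κ, σ) (c', κ', σ'))
    (hg : goodC c κ) (hk : goodK κ) : goodC c' κ' ∧ goodK κ' := by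
  cases hs with
  | assign x e κ σ => exact ⟨Or.inl trivial, hk⟩
  | seq c1 c2 κ σ =>
    rcases hg with h | ⟨hgu, h⟩
    · exact ⟨Or.inl h.1, Or.inl h.2, hk⟩
    · rcases h with h | h | ⟨d, hd, hnd⟩
      · exact ⟨Or.inl h.1, Or.inl h.2, hk⟩
      · exact absurd h (by simp)
      · cases hd
        exact ⟨Or.inl hnd, Or.inr ⟨hgu, Or.inr (Or.inl rfl)⟩, hk⟩
  | skip_seq c κ σ => exact ⟨hk.1, hk.2⟩
  | brk_seq c κ σ => exact ⟨Or.inl trivial, hk.2⟩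
  | cont_seq c κ σ =>
    rcases hg with h | ⟨hgu, _⟩
    · exact absurd h (by simp [noContinue])
    · exact ⟨Or.inr ⟨hgu, Or.inr (Or.inl rfl)⟩, hk.2⟩
  | if_true e c1 c2 κ σ h =>
    rcases hg with h' | ⟨_, h' | h' | ⟨d, hd, _⟩⟩
    · exact ⟨Or.inl h'.1, hk⟩
    · exact ⟨Or.inl h'.1, hk⟩
    · exact absurd h' (by simp)
    · exact absurd hd (by simp)
  | if_false e c1 c2 κ σ h =>
    rcases hg with h' | ⟨_, h' | h' | ⟨d, hd, _⟩⟩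
    · exact ⟨Or.inl h'.2, hk⟩
    · exact ⟨Or.inl h'.2, hk⟩
    · exact absurd h' (by simp)
    · exact absurd hd (by simp)
  | for_intro c1 c2 κ σ =>
    have hnc : noContinue c1 ∧ noContinue c2 := by
      rcases hg with h' | ⟨_, h' | h' | ⟨d, hd, _⟩⟩
      · exact h'
      · exact h'
      · exact absurd h' (by simp)
      · exact absurd hd (by simp)
    exact ⟨Or.inr ⟨trivial, Or.inr (Or.inr ⟨c1, rfl, hnc.1⟩)⟩,
      hnc.1, hnc.2, hk⟩
  | skip_loop2 c1 c2 κ σ =>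
    exact ⟨Or.inr ⟨trivial, Or.inr (Or.inr ⟨c1, rfl, hk.1⟩)⟩,
      hk.1, hk.2.1, hk.2.2⟩
  | cont_loop1 c1 c2 κ σ =>
    exact ⟨Or.inl hk.2.1, hk.1, hk.2.1, hk.2.2⟩
  | brk_loop1 c1 c2 κ σ => exact ⟨Or.inl trivial, hk.2.2⟩
  | brk_loop2 c1 c2 κ σ => exact ⟨Or.inl trivial, hk.2.2⟩

/-- the nocontinue rule is valid under the
    weakest-precondition based shallow embedding: if `c` and `κ` contain
    no continue and σ ⊨ WP (c,κ) {Q,[Rb,Rc]}, then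
    σ ⊨ WP (c,κ) {Q,[Rb,Rc']} for any assertion Rc'. -/
theorem wp_nocontinue (c : Com) (κ : Kont)
    (hc : noContinue c) (hκ : noContinueK κ)
    (σ : PState) (Q Rb Rc : Assertion)
    (h : WP c κ Q Rb Rc σ) :
    ∀ Rc' : Assertion, WP c κ Q Rb Rc' σ := by
  intro Rc'
  obtain ⟨X, hX, hc0⟩ := h
  refine ⟨fun cfg => X cfg ∧ goodC cfg.1 cfg.2.1 ∧ goodK cfg.2.1, ?_,
    hc0, Or.inl hc, noContinueK_goodK κ hκ⟩
  rintro ⟨c', κ', σ'⟩ ⟨hx, hg, hk⟩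
  rcases hX _ hx with ⟨hnil, hpost⟩ | ⟨hred, hstep⟩
  · refine Or.inl ⟨hnil, ?_⟩
    rcases hpost with h | h | ⟨hce, _⟩
    · exact Or.inl h
    · exact Or.inr (Or.inl h)
    · subst hce
      rcases hg with h | ⟨hgu, _⟩
      · exact absurd h (by simp [noContinue])
      · rw [hnil] at hgu; exact hgu.elim
  · refine Or.inr ⟨hred, ?_⟩
    rintro ⟨c'', κ'', σ''⟩ hs
    exact ⟨hstep _ hs, good_preserved hs hg hk⟩
end

section
/- Under the weakest-precondition based shallow embedding, sequence inversion is valid: for all c1, c2, Q, R⃗ there exists an assertion Q' such that for all σ: (1) σ ⊨ WP(c1;;c2, ε){Q,[R⃗]} implies σ ⊨ WP(c1, ε){Q',[R⃗]}, and (2) σ ⊨ Q' implies σ ⊨ WP(c2, ε){Q,[R⃗]}. The witness Q' is defined as Q'(σ) := σ ⊨ WP(c2, ε){Q,[R⃗]}. -/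
lemma step_frame {c : Com} {κ : Kont} {σ : PState} {c' : Com} {κ' : Kont}
    {σ' : PState} (κ0 : Kont) (h : Step (c, κ, σ) (c', κ', σ')) :
    Step (c, κ ++ κ0, σ) (c', κ' ++ κ0, σ') := by
  cases h <;> first
    | (constructor ; assumption)
    | constructor
    | (simp only [List.cons_append]; constructor)

lemma step_unframe (c : Com) (κ κ0 : Kont) (σ : PState) (cfg' : Config)
    (hnt : ¬ (κ = [] ∧ (c = .skip ∨ c = .brk ∨ c = .cont)))
    (h : Step (c, κ ++ κ0, σ) cfg') :
    ∃ c' κ' σ', cfg' = (c', κ' ++ κ0, σ') ∧ Step (c, κ, σ) (c', κ', σ') := by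
  generalize hμ : κ ++ κ0 = μ at h
  cases h with
  | assign x e =>
    subst hμ
    exact ⟨_, κ, _, rfl, Step.assign x e κ σ⟩
  | seq a b =>
    subst hμ
    exact ⟨a, .kseq b :: κ, σ, rfl, Step.seq a b κ σ⟩
  | skip_seq d κ' =>
    cases κ with
    | nil => exact absurd ⟨rfl, Or.inl rfl⟩ hnt
    | cons f κt =>
      simp only [List.cons_append, List.cons.injEq] at *
      obtain ⟨rfl, rfl⟩ := ‹f = KFrame.kseq d ∧ κt ++ κ0 = κ'›
      exact ⟨d, κt, σ, rfl, Step.skip_seq d κt σ⟩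
  | brk_seq d κ' =>
    cases κ with
    | nil => exact absurd ⟨rfl, Or.inr (Or.inl rfl)⟩ hnt
    | cons f κt =>
      simp only [List.cons_append, List.cons.injEq] at *
      obtain ⟨rfl, rfl⟩ := ‹f = KFrame.kseq d ∧ κt ++ κ0 = κ'›
      exact ⟨.brk, κt, σ, rfl, Step.brk_seq d κt σ⟩
  | cont_seq d κ' =>
    cases κ with
    | nil => exact absurd ⟨rfl, Or.inr (Or.inr rfl)⟩ hnt
    | cons f κt =>
      simp only [List.cons_append, List.cons.injEq] at *
      obtain ⟨rfl, rfl⟩ := ‹f = KFrame.kseq d ∧ κt ++ κ0 = κ'›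
      exact ⟨.cont, κt, σ, rfl, Step.cont_seq d κt σ⟩
  | if_true e a b _ _ he =>
    subst hμ
    exact ⟨a, κ, σ, rfl, Step.if_true e a b κ σ he⟩
  | if_false e a b _ _ he =>
    subst hμ
    exact ⟨b, κ, σ, rfl, Step.if_false e a b κ σ he⟩
  | for_intro a b =>
    subst hμ
    exact ⟨_, .kloop1 a b :: κ, σ, rfl, Step.for_intro a b κ σ⟩
  | skip_loop2 a b κ' =>
    cases κ with
    | nil => exact absurd ⟨rfl, Or.inl rfl⟩ hnt
    | cons f κt =>
      simp only [List.cons_append, List.cons.injEq] at *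
      obtain ⟨rfl, rfl⟩ := ‹f = KFrame.kloop2 a b ∧ κt ++ κ0 = κ'›
      exact ⟨_, .kloop1 a b :: κt, σ, rfl, Step.skip_loop2 a b κt σ⟩
  | cont_loop1 a b κ' =>
    cases κ with
    | nil => exact absurd ⟨rfl, Or.inr (Or.inr rfl)⟩ hnt
    | cons f κt =>
      simp only [List.cons_append, List.cons.injEq] at *
      obtain ⟨rfl, rfl⟩ := ‹f = KFrame.kloop1 a b ∧ κt ++ κ0 = κ'›
      exact ⟨b, .kloop2 a b :: κt, σ, rfl, Step.cont_loop1 a b κt σ⟩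
  | brk_loop1 a b κ' =>
    cases κ with
    | nil => exact absurd ⟨rfl, Or.inr (Or.inl rfl)⟩ hnt
    | cons f κt =>
      simp only [List.cons_append, List.cons.injEq] at *
      obtain ⟨rfl, rfl⟩ := ‹f = KFrame.kloop1 a b ∧ κt ++ κ0 = κ'›
      exact ⟨.skip, κt, σ, rfl, Step.brk_loop1 a b κt σ⟩
  | brk_loop2 a b κ' =>
    cases κ with
    | nil => exact absurd ⟨rfl, Or.inr (Or.inl rfl)⟩ hnt
    | cons f κt =>
      simp only [List.cons_append, List.cons.injEq] at *
      obtain ⟨rfl, rfl⟩ := ‹f = KFrame.kloop2 a b ∧ κt ++ κ0 = κ'›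
      exact ⟨.skip, κt, σ, rfl, Step.brk_loop2 a b κt σ⟩

lemma not_step_terminal (c : Com) (σ : PState)
    (hc : c = .skip ∨ c = .brk ∨ c = .cont) :
    ¬ Reducible (c, [], σ) := by
  rintro ⟨cfg', h⟩
  rcases hc with rfl | rfl | rfl <;> cases h

/-- sequence inversion is valid under the
    weakest-precondition based shallow embedding: for all c1, c2, Q, Rb,
    Rc there is an assertion Q' such that
    (1) WP (c1;;c2, ε) {Q,[Rb,Rc]} implies WP (c1, ε) {Q',[Rb,Rc]}, and
    (2) every state satisfying Q' satisfies WP (c2, ε) {Q,[Rb,Rc]}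
    (the witness can be taken to be Q' σ := σ ⊨ WP (c2, ε) {Q,[Rb,Rc]}). -/
theorem wp_seq_inv (c1 c2 : Com) (Q Rb Rc : Assertion) :
    ∃ Q' : Assertion,
      (∀ σ, WP (.seq c1 c2) [] Q Rb Rc σ → WP c1 [] Q' Rb Rc σ) ∧
      (∀ σ, Q' σ → WP c2 [] Q Rb Rc σ) := by
  refine ⟨WP c2 [] Q Rb Rc, ?_, fun σ h => h⟩
  rintro σ ⟨X, hX, hin⟩
  have h0 : X (c1, [.kseq c2], σ) := by
    rcases hX _ hin with ⟨_, hp⟩ | ⟨_, hall⟩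
    · rcases hp with ⟨h, _⟩ | ⟨h, _⟩ | ⟨h, _⟩ <;> exact absurd h (by simp)
    · exact hall _ (Step.seq c1 c2 [] σ)
  refine ⟨fun cfg => X (cfg.1, cfg.2.1 ++ [.kseq c2], cfg.2.2), ?_, h0⟩
  rintro ⟨c, κ, σ'⟩ hY
  dsimp only at hY
  by_cases hterm : κ = [] ∧ (c = .skip ∨ c = .brk ∨ c = .cont)
  · obtain ⟨rfl, hc⟩ := hterm
    rcases hX _ hY with ⟨habs, _⟩ | ⟨_, hall⟩
    · simp at habs
    rcases hc with rfl | rfl | rfl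
    · exact Or.inl ⟨rfl, Or.inl ⟨rfl, X, hX, hall _ (Step.skip_seq c2 [] σ')⟩⟩
    · have hb := hall _ (Step.brk_seq c2 [] σ')
      rcases hX _ hb with ⟨_, hp⟩ | ⟨hr, _⟩
      · rcases hp with ⟨h, _⟩ | ⟨_, h⟩ | ⟨h, _⟩
        · exact absurd h (by simp)
        · exact Or.inl ⟨rfl, Or.inr (Or.inl ⟨rfl, h⟩)⟩
        · exact absurd h (by simp)
      · exact absurd hr (not_step_terminal _ _ (Or.inr (Or.inl rfl)))
    · have hb := hall _ (Step.cont_seq c2 [] σ')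
      rcases hX _ hb with ⟨_, hp⟩ | ⟨hr, _⟩
      · rcases hp with ⟨h, _⟩ | ⟨h, _⟩ | ⟨_, h⟩
        · exact absurd h (by simp)
        · exact absurd h (by simp)
        · exact Or.inl ⟨rfl, Or.inr (Or.inr ⟨rfl, h⟩)⟩
      · exact absurd hr (not_step_terminal _ _ (Or.inr (Or.inr rfl)))
  · right
    rcases hX _ hY with ⟨habs, _⟩ | ⟨⟨cfg', hs⟩, hall⟩
    · simp at habs
    obtain ⟨c', κ', σ'', rfl, hs'⟩ := step_unframe c κ [.kseq c2] σ' cfg' hterm hs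
    refine ⟨⟨_, hs'⟩, ?_⟩
    rintro ⟨c'', κ'', σ3⟩ hstep
    exact hall _ (step_frame [.kseq c2] hstep)
end

section
/- Under the continuation based shallow embedding, simulation lifts to guard implication: if (c2,κ2) ∼ (c1,κ1) (where ∼ is a simulation in which, additionally, when the source terminates the target may also diverge without changing state), then for all preconditions P, guard(P, c1, κ1) implies guard(P, c2, κ2). -/
/-- The generating functional of the coinductive safety predicate. -/
def SafeStep (X : Config → Prop) (cfg : Config) : Prop :=
  Terminal cfg.1 cfg.2.1 ∨
  (Reducible cfg ∧ ∀ cfg', Step cfg cfg' → X cfg')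

/-- `Safe cfg`: cfg belongs to the largest set closed under the terminal
    and preservation cases (union of all post-fixed points). -/
def Safe (cfg : Config) : Prop :=
  ∃ X : Config → Prop, (∀ c, X c → SafeStep X c) ∧ X cfg

/-- `Guard P c κ` (P guards (c,κ)): from every state satisfying P, the
    configuration (c, κ, ·) is safe. -/
def Guard (P : Assertion) (c : Com) (κ : Kont) : Prop :=
  ∀ σ, P σ → Safe (c, κ, σ)

/-- `SilentDiv cfg`: the configuration loops forever without changing the
    program state. -/
def SilentDiv (cfg : Config) : Prop :=
  ∃ X : Config → Prop, X cfg ∧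
    ∀ c κ σ, X (c, κ, σ) → ∃ c' κ', Step (c, κ, σ) (c', κ', σ) ∧ X (c', κ', σ)

/-- A simulation whose Termination case is weakened: when the source has
    safely terminated, the target either reduces to the same terminal in
    finitely many steps without changing the state, or loops forever
    without changing the state. -/
def IsSimulationW (R : Com × Kont → Com × Kont → Prop) : Prop :=
  ∀ c1 κ1 c2 κ2, R (c1, κ1) (c2, κ2) →
    (Terminal c1 κ1 →
      ∀ σ, MSteps (c2, κ2, σ) (c1, κ1, σ) ∨ SilentDiv (c2, κ2, σ)) ∧
    (∀ σ c1' κ1' σ', Step (c1, κ1, σ) (c1', κ1', σ') →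
      ∃ c2' κ2', R (c1', κ1') (c2', κ2') ∧
        MSteps (c2, κ2, σ) (c2', κ2', σ')) ∧
    (∀ σ, IsError (c1, κ1, σ) →
      ∃ cfg, MSteps (c2, κ2, σ) cfg ∧ IsError cfg)

lemma terminal_no_step_s13 {cfg cfg' : Config} (ht : Terminal cfg.1 cfg.2.1)
    (hs : Step cfg cfg') : False := by
  obtain ⟨hκ, hc⟩ := ht
  cases hs <;> simp_all

lemma safe_unfold {cfg : Config} (h : Safe cfg) : SafeStep Safe cfg := by
  obtain ⟨X, hX, hc⟩ := h
  rcases hX _ hc with h | ⟨hr, hall⟩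
  · exact Or.inl h
  · exact Or.inr ⟨hr, fun cfg' hs => ⟨X, hX, hall _ hs⟩⟩

lemma safe_step {cfg cfg' : Config} (h : Safe cfg) (hs : Step cfg cfg') :
    Safe cfg' := by
  rcases safe_unfold h with ht | ⟨_, hall⟩
  · exact absurd hs (fun hs => terminal_no_step_s13 ht hs)
  · exact hall _ hs

lemma safe_msteps {cfg cfg' : Config} (h : Safe cfg) (hs : MSteps cfg cfg') :
    Safe cfg' := by
  induction hs with
  | refl => exact h
  | tail _ step ih => exact safe_step ih step

lemma safe_not_error {cfg : Config} (h : Safe cfg) : ¬ IsError cfg := by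
  rintro ⟨hnt, hnr⟩
  rcases safe_unfold h with ht | ⟨hr, _⟩
  · exact hnt ht
  · exact hnr hr

/-- under the continuation based shallow embedding,
    simulation lifts to guard implication: if (c2,κ2) ∼ (c1,κ1) then
    guard(P, c1, κ1) implies guard(P, c2, κ2) for every precondition P. -/
theorem guard_simulation (R : Com × Kont → Com × Kont → Prop)
    (hsim : IsSimulationW R)
    (c1 c2 : Com) (κ1 κ2 : Kont) (hrel : R (c2, κ2) (c1, κ1)) :
    ∀ P : Assertion, Guard P c1 κ1 → Guard P c2 κ2 := by
  intro P hg σ hP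
  refine ⟨fun cfg => ∃ ca κa, R (cfg.1, cfg.2.1) (ca, κa) ∧ Safe (ca, κa, cfg.2.2),
    ?_, ⟨c1, κ1, hrel, hg σ hP⟩⟩
  rintro ⟨cb, κb, σb⟩ ⟨ca, κa, hR, hsafe⟩
  obtain ⟨hterm, hstep, herr⟩ := hsim _ _ _ _ hR
  by_cases ht : Terminal cb κb
  · exact Or.inl ht
  · by_cases hr : Reducible (cb, κb, σb)
    · refine Or.inr ⟨hr, ?_⟩
      rintro ⟨cb', κb', σb'⟩ hs
      obtain ⟨ca', κa', hR', hms⟩ := hstep σb _ _ _ hs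
      exact ⟨ca', κa', hR', safe_msteps hsafe hms⟩
    · obtain ⟨cfg, hms, herr'⟩ := herr σb ⟨ht, hr⟩
      exact absurd herr' (safe_not_error (safe_msteps hsafe hms))
end

section
/- The derivation of loop-nocontinue from inversion and structural rules is correct: in the deeply embedded Hoare logic, if c1 and c2 contain no continue and ⊢ {P} for(;;skip)(c1;;c2) {Q,[R⃗]} is provable, then ⊢ {P} for(;;c2) c1 {Q,[R⃗]} is provable, assuming the extended rules loop-inv, skip-inv, seq-inv, nocontinue, and consequence are available. -/
theorem loop_bot (P Q Rb Rc : Assertion) (c1 c2 : Com)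
    (h : Provable P (.forloop c1 c2) Q Rb Rc) :
    Provable P (.forloop c1 c2) Q aBot aBot ∧ Entails Q Q := by
  generalize hc : Com.forloop c1 c2 = c at h
  induction h with
  | loop P I Q d1 d2 h1 h2 =>
      injection hc with e1 e2
      subst e1; subst e2
      exact ⟨Provable.loop P I Q _ _ h1 h2, fun σ h => h⟩
  | conseq P P' Q Q' Rb Rb' Rc Rc' c h hp hq hb hc' ih =>
      obtain ⟨h', _⟩ := ih hc
      exact ⟨Provable.conseq P P' Q Q' aBot aBot aBot aBot c h' hp hq
        (fun _ h => h.elim) (fun _ h => h.elim), fun σ h => h⟩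
  | skip => exact absurd hc (by simp)
  | brk => exact absurd hc (by simp)
  | cont => exact absurd hc (by simp)
  | assign => exact absurd hc (by simp)
  | seq => exact absurd hc (by simp)
  | ifc => exact absurd hc (by simp)

/-- the derivation of loop-nocontinue from inversion and
    structural rules is correct: assuming the extended rules seq-inv,
    skip-inv, loop-inv, and nocontinue are available (hoare-loop and
    hoare-consequence are primary rules), if c1 and c2 contain no
    continue and ⊢ {P} for(;;skip)(c1;;c2) {Q,[Rb,Rc]} is provable,
    then ⊢ {P} for(;;c2) c1 {Q,[Rb,Rc]} is provable. -/
theorem loop_nocontinue_derivation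
    (seq_inv : ∀ (P Q Rb Rc : Assertion) (c1 c2 : Com),
      Provable P (.seq c1 c2) Q Rb Rc →
      ∃ S : Assertion, Provable P c1 S Rb Rc ∧ Provable S c2 Q Rb Rc)
    (skip_inv : ∀ (P Q Rb Rc : Assertion),
      Provable P .skip Q Rb Rc → Entails P Q)
    (loop_inv : ∀ (P Q : Assertion) (c1 c2 : Com),
      Provable P (.forloop c1 c2) Q aBot aBot →
      ∃ I1 I2 : Assertion,
        Provable I1 c1 I2 Q I2 ∧ Provable I2 c2 I1 Q aBot ∧ Entails P I1)
    (nocontinue : ∀ (P Q Rb Rc Rc' : Assertion) (c : Com),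
      noContinue c → Provable P c Q Rb Rc → Provable P c Q Rb Rc')
    (P Q Rb Rc : Assertion) (c1 c2 : Com)
    (h1 : noContinue c1) (h2 : noContinue c2)
    (h : Provable P (.forloop (.seq c1 c2) .skip) Q Rb Rc) :
    Provable P (.forloop c1 c2) Q Rb Rc := by
  obtain ⟨h, -⟩ := loop_bot P Q Rb Rc _ _ h
  obtain ⟨I1, I2, hB, hS, hPI⟩ := loop_inv P Q _ _ h
  have hI21 : Entails I2 I1 := skip_inv _ _ _ _ hS
  obtain ⟨S, hc1, hc2⟩ := seq_inv I1 I2 Q I2 c1 c2 hB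
  have hc1' : Provable I1 c1 S Q S := nocontinue _ _ _ _ _ _ h1 hc1
  have hc2' : Provable S c2 I2 Q aBot := nocontinue _ _ _ _ _ _ h2 hc2
  have hc2'' : Provable S c2 I1 Q aBot :=
    Provable.conseq S S I1 I2 Q Q aBot aBot c2 hc2'
      (fun _ h => h) hI21 (fun _ h => h) (fun _ h => h)
  have hl : Provable I1 (.forloop c1 c2) Q aBot aBot :=
    Provable.loop I1 S Q c1 c2 hc1' hc2''
  exact Provable.conseq P I1 Q Q Rb aBot Rc aBot _ hl hPI
    (fun _ h => h) (fun _ h => h.elim) (fun _ h => h.elim)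
end
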